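/- Let a > 0, τ ∈ (0,1), d > 0, and let φ ∈ C([−1,0]) satisfy φ(t) > 0 for t ∈ [−1,−τ), φ(−τ) = 0, φ(t) < 0 for t ∈ (−τ,0), and φ(0) = −d. If x : [−1,∞) → ℝ is a solution of the relay equation ẋ(t) = R(x(t−1)) with initial function φ, then x(t) = x0(t − ((1−τ)(a+1) + d)) for all t ≥ (1−τ)(a+1) + d, where x0 is extended T0-periodically to all of ℝ. -/

import Mathlib

/-- The relay nonlinearity: `R a x = 1` if `x ≤ 0`, and `R a x = -a` if `x > 0`. -/
noncomputable def R (a x : ℝ) : ℝ := if x ≤ 0 then 1 else -a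

/-- `x : [-1,∞) → ℝ` is a solution of the relay equation `x'(t) = R a (x (t-1))`
with initial function `φ ∈ C([-1,0])`: `x` is continuous on `[-1,∞)`, coincides
with `φ` on `[-1,0]`, and for every `t > 0` outside an exceptional set having
finitely many points in each bounded interval, `x` is differentiable at `t` with
`x'(t) = R a (x (t-1))`. -/
def IsSolution (a : ℝ) (φ x : ℝ → ℝ) : Prop :=
  ContinuousOn x (Set.Ici (-1 : ℝ)) ∧
  (∀ t ∈ Set.Icc (-1 : ℝ) 0, x t = φ t) ∧
  ∃ S : Set ℝ, (∀ A B : ℝ, (S ∩ Set.Icc A B).Finite) ∧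
    ∀ t : ℝ, 0 < t → t ∉ S → HasDerivAt x (R a (x (t - 1))) t

/-!
The right-hand side `R a (x (t - 1))` only depends on the sign of `x` one time unit earlier, so
on an interval where that sign is known `x` is affine with slope `1` or `-a`; since the delay
is `1`, the sign can be read off the affine formula being established (method of steps).
From `φ` one gets `x t = -d - a t` on `[0, 1 - τ]`, after which `x` rises with slope `1` and
vanishes at `σ = (1 - τ)(a + 1) + d`. Whenever `x u = u - s` on `[s, s + 1]`, `x` falls with
slope `-a` for time `t0` and then rises with slope `1` for time `a + 1`: this reproduces
`x0 (· - s)` on `[s, s + T0]` and the same situation at `s + T0`.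
-/

open Set

theorem Set.countable_of_forall_finite_inter_Icc {S : Set ℝ}
    (hS : ∀ A B : ℝ, (S ∩ Icc A B).Finite) : S.Countable := by
  have hcover : S = ⋃ n : ℕ, S ∩ Icc (-n : ℝ) n := by
    ext t
    simp only [mem_iUnion, mem_inter_iff, mem_Icc]
    obtain ⟨n, hn⟩ := exists_nat_ge |t|
    exact ⟨fun ht => ⟨n, ht, by linarith [neg_abs_le t], by linarith [le_abs_self t]⟩,
      fun ⟨_, ht, _⟩ => ht⟩
  rw [hcover]
  exact countable_iUnion fun n => (hS _ _).countable

theorem eq_add_mul_sub_of_hasDerivAt_off_countable {x : ℝ → ℝ} {S : Set ℝ} {A B c : ℝ}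
    (hS : S.Countable) (hAB : A ≤ B) (hc : ContinuousOn x (Icc A B))
    (hd : ∀ t ∈ Ioo A B \ S, HasDerivAt x c t) : x B = x A + c * (B - A) := by
  have hftc := MeasureTheory.integral_eq_of_hasDerivAt_off_countable_of_le x (fun _ => c) hAB hS
    hc hd intervalIntegrable_const
  rw [intervalIntegral.integral_const, smul_eq_mul] at hftc
  linarith

/-- Induct on unit steps: on `[A + n, A + n + 1]` the hypothesis only looks back into the part
already known to be affine. -/
theorem eq_add_mul_sub_of_hasDerivAt_of_past {x : ℝ → ℝ} {S : Set ℝ} {A B c : ℝ}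
    (hS : S.Countable) (hc : ContinuousOn x (Icc A B))
    (hd : ∀ t ∈ Ioo A B \ S, (∀ s ∈ Icc A (t - 1), x s = x A + c * (s - A)) →
      HasDerivAt x c t) :
    ∀ t ∈ Icc A B, x t = x A + c * (t - A) := by
  suffices h : ∀ n : ℕ, ∀ t ∈ Icc A B, t ≤ A + n → x t = x A + c * (t - A) by
    intro t ht
    obtain ⟨n, hn⟩ := exists_nat_ge (t - A)
    exact h n t ht (by linarith)
  intro n
  induction n with
  | zero =>
    intro t ht htA
    rw [le_antisymm (by simpa using htA) ht.1]
    ring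
  | succ n ih =>
    intro t ht htn
    push_cast at htn
    rcases le_or_gt t (A + n) with h | h
    · exact ih t ht h
    have hAn : A ≤ A + n := le_add_of_nonneg_right n.cast_nonneg
    have hstep := eq_add_mul_sub_of_hasDerivAt_off_countable hS h.le
      (hc.mono (Icc_subset_Icc hAn ht.2)) fun u hu =>
        hd u ⟨⟨by linarith [hu.1.1], by linarith [hu.1.2, ht.2]⟩, hu.2⟩ fun s hs =>
          ih s ⟨hs.1, by linarith [hs.2, hu.1.2, ht.2]⟩ (by linarith [hs.2, hu.1.2])
    rw [hstep, ih (A + n) ⟨hAn, by linarith [ht.2]⟩ le_rfl]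
    ring

theorem forall_of_forall_mem_Icc_nat_mul {p : ℝ → Prop} {σ T : ℝ} (hT : 0 < T)
    (h : ∀ n : ℕ, ∀ u ∈ Icc (σ + n * T) (σ + n * T + T), p u) : ∀ t, σ ≤ t → p t := by
  intro t ht
  have hfloor := Nat.floor_le (div_nonneg (sub_nonneg.2 ht) hT.le)
  have hceil := Nat.lt_floor_add_one ((t - σ) / T)
  rw [le_div_iff₀ hT] at hfloor
  rw [div_lt_iff₀ hT] at hceil
  exact h _ t ⟨by linarith, by linarith⟩

theorem R_of_nonpos {a x : ℝ} (hx : x ≤ 0) : R a x = 1 := if_pos hx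

theorem R_of_pos {a x : ℝ} (hx : 0 < x) : R a x = -a := if_neg hx.not_ge

namespace IsSolution

variable {a : ℝ} {φ x : ℝ → ℝ}

theorem eq_add_mul_sub (hx : IsSolution a φ x) {A B c : ℝ} (hA : 0 ≤ A)
    (hR : ∀ t ∈ Ioo A B, (∀ s ∈ Icc A (t - 1), x s = x A + c * (s - A)) →
      R a (x (t - 1)) = c) :
    ∀ t ∈ Icc A B, x t = x A + c * (t - A) := by
  obtain ⟨hxc, -, S, hS, hxd⟩ := hx
  refine eq_add_mul_sub_of_hasDerivAt_of_past (countable_of_forall_finite_inter_Icc hS)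
    (hxc.mono fun t ht => (by linarith [ht.1] : -1 ≤ t)) fun t ht hpast => ?_
  rw [← hR t ht.1 hpast]
  exact hxd t (hA.trans_lt ht.1.1) ht.2


theorem eq_sub_mul_of_initial_pos (hx : IsSolution a φ x) {τ : ℝ} (hτ : τ ∈ Ioo (0 : ℝ) 1)
    (hφ1 : ∀ t ∈ Ico (-1 : ℝ) (-τ), 0 < φ t) :
    ∀ t ∈ Icc 0 (1 - τ), x t = x 0 - a * t := by
  have h := hx.eq_add_mul_sub le_rfl (B := 1 - τ) (c := -a) fun t ht _ => by
    rw [hx.2.1 (t - 1) ⟨by linarith [ht.1], by linarith [ht.2, hτ.1]⟩]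
    exact R_of_pos (hφ1 _ ⟨by linarith [ht.1], by linarith [ht.2]⟩)
  intro t ht
  rw [h t ht]
  ring

theorem eq_sub_of_initial_sign_change (hx : IsSolution a φ x) (ha : 0 < a) {τ d : ℝ}
    (hτ : τ ∈ Ioo (0 : ℝ) 1) (hd : 0 < d) (hφ1 : ∀ t ∈ Ico (-1 : ℝ) (-τ), 0 < φ t)
    (hφ2 : ∀ t ∈ Ioo (-τ) (0 : ℝ), φ t < 0) (hφ0 : φ 0 = -d) :
    ∀ t ∈ Icc (1 - τ) ((1 - τ) * (a + 1) + d + 1), x t = t - ((1 - τ) * (a + 1) + d) := by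
  have hx0 : x 0 = -d := (hx.2.1 0 ⟨by norm_num, le_rfl⟩).trans hφ0
  have hinit := hx.eq_sub_mul_of_initial_pos hτ hφ1
  have hx1 : x (1 - τ) = -d - a * (1 - τ) := by
    rw [hinit _ ⟨by linarith [hτ.2], le_rfl⟩, hx0]
  have h := hx.eq_add_mul_sub (A := 1 - τ) (B := (1 - τ) * (a + 1) + d + 1) (c := 1) (by linarith [hτ.2])
    fun t ht hpast => R_of_nonpos <| by
      rcases le_or_gt (t - 1) 0 with h0 | h0
      · rw [hx.2.1 _ ⟨by linarith [ht.1, hτ.2], h0⟩]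
        rcases h0.lt_or_eq with h0 | h0
        · exact (hφ2 _ ⟨by linarith [ht.1], h0⟩).le
        · rw [h0, hφ0]
          exact neg_nonpos.2 hd.le
      rcases le_or_gt (t - 1) (1 - τ) with h1 | h1
      · rw [hinit _ ⟨h0.le, h1⟩, hx0]
        nlinarith
      · rw [hpast _ ⟨h1.le, le_rfl⟩, hx1]
        nlinarith [ht.2]
  intro t ht
  rw [h t ht, hx1]
  ring

theorem eq_neg_mul_of_rising (hx : IsSolution a φ x) (ha : 0 < a) {t0 s : ℝ}
    (ht0 : a * t0 = a + 1) (hs : 0 ≤ s) (hrise : ∀ u ∈ Icc s (s + 1), x u = u - s) :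
    ∀ u ∈ Icc (s + 1) (s + t0 + 1), x u = -a * (u - s - t0) := by
  have hx1 : x (s + 1) = 1 := by
    rw [hrise _ ⟨by linarith, le_rfl⟩]
    ring
  have h := hx.eq_add_mul_sub (A := s + 1) (B := s + t0 + 1) (c := -a) (by linarith)
    fun t ht hpast => R_of_pos <| by
      rcases le_or_gt (t - 1) (s + 1) with h1 | h1
      · rw [hrise _ ⟨by linarith [ht.1], h1⟩]
        linarith [ht.1]
      · rw [hpast _ ⟨h1.le, le_rfl⟩, hx1]
        nlinarith [ht.2]
  intro u hu
  rw [h u hu, hx1]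
  linear_combination -ht0

theorem eq_sub_of_falling (hx : IsSolution a φ x) (ha : 0 < a) {t0 s : ℝ}
    (ht0 : a * t0 = a + 1) (hs : 0 ≤ s)
    (hfall : ∀ u ∈ Icc (s + 1) (s + t0 + 1), x u = -a * (u - s - t0)) :
    ∀ u ∈ Icc (s + t0 + 1) (s + t0 + a + 2), x u = u - (s + t0 + a + 1) := by
  have ht0_gt : 1 < t0 := by nlinarith
  have hx1 : x (s + t0 + 1) = -a := by
    rw [hfall _ ⟨by linarith, le_rfl⟩]
    ring
  have h := hx.eq_add_mul_sub (A := s + t0 + 1) (B := s + t0 + a + 2) (c := 1) (by linarith)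
    fun t ht hpast => R_of_nonpos <| by
      rcases le_or_gt (t - 1) (s + t0 + 1) with h1 | h1
      · rw [hfall _ ⟨by linarith [ht.1], h1⟩]
        nlinarith [ht.1]
      · rw [hpast _ ⟨h1.le, le_rfl⟩, hx1]
        linarith [ht.2]
  intro u hu
  rw [h u hu, hx1]
  ring

theorem eq_sub_add_of_rising (hx : IsSolution a φ x) (ha : 0 < a) {t0 T0 s : ℝ}
    (ht0 : a * t0 = a + 1) (hT0 : T0 = t0 + a + 1) (hs : 0 ≤ s)
    (hrise : ∀ u ∈ Icc s (s + 1), x u = u - s) :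
    ∀ u ∈ Icc (s + T0) (s + T0 + 1), x u = u - (s + T0) := by
  subst hT0
  intro u hu
  rw [hx.eq_sub_of_falling ha ht0 hs (hx.eq_neg_mul_of_rising ha ht0 hs hrise) u
    ⟨by linarith [hu.1], by linarith [hu.2]⟩]
  ring

theorem eq_comp_sub_of_rising (hx : IsSolution a φ x) (ha : 0 < a) {x0 : ℝ → ℝ} {t0 T0 s : ℝ}
    (ht0 : a * t0 = a + 1) (hT0 : T0 = t0 + a + 1)
    (hx0a : ∀ t ∈ Icc (0 : ℝ) 1, x0 t = t)
    (hx0b : ∀ t ∈ Icc (1 : ℝ) (t0 + 1), x0 t = -a * (t - t0))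
    (hx0c : ∀ t ∈ Icc (t0 + 1) T0, x0 t = t - T0) (hs : 0 ≤ s)
    (hrise : ∀ u ∈ Icc s (s + 1), x u = u - s) :
    ∀ u ∈ Icc s (s + T0), x u = x0 (u - s) := by
  have hfall := hx.eq_neg_mul_of_rising ha ht0 hs hrise
  subst hT0
  intro u hu
  rcases le_or_gt u (s + 1) with h1 | h1
  · rw [hrise u ⟨hu.1, h1⟩, hx0a _ ⟨by linarith [hu.1], by linarith⟩]
  rcases le_or_gt u (s + t0 + 1) with h2 | h2
  · rw [hfall u ⟨h1.le, h2⟩, hx0b _ ⟨by linarith, by linarith⟩]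
  · rw [hx.eq_sub_of_falling ha ht0 hs hfall u ⟨h2.le, by linarith [hu.2]⟩,
      hx0c _ ⟨by linarith, by linarith [hu.2]⟩]
    ring

end IsSolution

theorem stmt_5_general (a : ℝ) (ha : 0 < a) (τ : ℝ) (hτ : τ ∈ Set.Ioo (0 : ℝ) 1)
    (d : ℝ) (hd : 0 < d) (t0 T0 : ℝ)
    (ht0 : t0 = (a + 1) / a) (hT0 : T0 = (a + 1) ^ 2 / a)
    (φ : ℝ → ℝ)
    (hφ1 : ∀ t ∈ Set.Ico (-1 : ℝ) (-τ), 0 < φ t)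
    (hφ2 : ∀ t ∈ Set.Ioo (-τ) (0 : ℝ), φ t < 0) (hφ0 : φ 0 = -d)
    (x : ℝ → ℝ) (hx : IsSolution a φ x)
    (x0 : ℝ → ℝ)
    (hx0per : ∀ t : ℝ, x0 (t + T0) = x0 t)
    (hx0a : ∀ t ∈ Set.Icc (0 : ℝ) 1, x0 t = t)
    (hx0b : ∀ t ∈ Set.Icc (1 : ℝ) (t0 + 1), x0 t = -a * (t - t0))
    (hx0c : ∀ t ∈ Set.Icc (t0 + 1) T0, x0 t = t - T0) :
    ∀ t : ℝ, (1 - τ) * (a + 1) + d ≤ t →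
      x t = x0 (t - ((1 - τ) * (a + 1) + d)) := by
  have ht0' : a * t0 = a + 1 := by
    rw [ht0]
    field_simp
  have hT0' : T0 = t0 + a + 1 := by
    rw [hT0, ht0]
    field_simp
    ring
  have hT0_pos : 0 < T0 := by nlinarith
  set σ := (1 - τ) * (a + 1) + d
  have hσ : 1 - τ ≤ σ := by nlinarith [hτ.2]
  have hstart_nonneg (n : ℕ) : 0 ≤ σ + n * T0 := by
    have := mul_nonneg n.cast_nonneg hT0_pos.le
    linarith [hτ.2]
  have hrise (n : ℕ) : ∀ u ∈ Icc (σ + n * T0) (σ + n * T0 + 1), x u = u - (σ + n * T0) := by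
    induction n with
    | zero =>
      simpa using fun u (hu : u ∈ Icc σ (σ + 1)) =>
        hx.eq_sub_of_initial_sign_change ha hτ hd hφ1 hφ2 hφ0 u ⟨hσ.trans hu.1, hu.2⟩
    | succ n ih =>
      rw [Nat.cast_succ, add_one_mul, ← add_assoc]
      exact hx.eq_sub_add_of_rising ha ht0' hT0' (hstart_nonneg n) ih
  refine forall_of_forall_mem_Icc_nat_mul hT0_pos fun n u hu => ?_
  rw [← Function.Periodic.sub_nat_mul_eq hx0per n, sub_sub]
  exact hx.eq_comp_sub_of_rising ha ht0' hT0' hx0a hx0b hx0c (hstart_nonneg n) (hrise n) u hu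

/-- a solution with an initial function positive on `[-1,-τ)`,
vanishing at `-τ`, negative on `(-τ,0)` with `φ(0) = -d`, `d > 0`, coincides with
`x0 (t - ((1-τ)(a+1) + d))` for all `t ≥ (1-τ)(a+1) + d`. -/
theorem stmt_5 (a : ℝ) (ha : 0 < a) (τ : ℝ) (hτ : τ ∈ Set.Ioo (0 : ℝ) 1)
    (d : ℝ) (hd : 0 < d) (t0 T0 : ℝ)
    (ht0 : t0 = (a + 1) / a) (hT0 : T0 = (a + 1) ^ 2 / a)
    (φ : ℝ → ℝ) (hφc : ContinuousOn φ (Set.Icc (-1 : ℝ) 0))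
    (hφ1 : ∀ t ∈ Set.Ico (-1 : ℝ) (-τ), 0 < φ t) (hφτ : φ (-τ) = 0)
    (hφ2 : ∀ t ∈ Set.Ioo (-τ) (0 : ℝ), φ t < 0) (hφ0 : φ 0 = -d)
    (x : ℝ → ℝ) (hx : IsSolution a φ x)
    (x0 : ℝ → ℝ)
    (hx0per : ∀ t : ℝ, x0 (t + T0) = x0 t)
    (hx0a : ∀ t ∈ Set.Icc (0 : ℝ) 1, x0 t = t)
    (hx0b : ∀ t ∈ Set.Icc (1 : ℝ) (t0 + 1), x0 t = -a * (t - t0))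
    (hx0c : ∀ t ∈ Set.Icc (t0 + 1) T0, x0 t = t - T0) :
    ∀ t : ℝ, (1 - τ) * (a + 1) + d ≤ t →
      x t = x0 (t - ((1 - τ) * (a + 1) + d)) :=
  stmt_5_general a ha τ hτ d hd t0 T0 ht0 hT0 φ hφ1 hφ2 hφ0 x hx x0 hx0per hx0a hx0b hx0c
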